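/- Let (A₁ →d A₀, μ₂, μ₃, α₀, α₁) be a strict 2-term HA∞-algebra (that is, μ₃ = 0). Define μ_A(m,n) := μ₂(d(m), n) for m, n ∈ A₁. Then μ_A(m,n) = μ₂(m, d(n)); (A₁, μ_A, α₁) is a hom-associative algebra (α₁(μ_A(m,n)) = μ_A(α₁(m),α₁(n)) and μ_A(α₁(m), μ_A(n,p)) = μ_A(μ_A(m,n), α₁(p))); and d is a morphism of hom-associative algebras from (A₁, μ_A, α₁) to (A₀, μ₂, α₀), i.e. d(μ_A(m,n)) = μ₂(d(m), d(n)) and α₀ ∘ d = d ∘ α₁. -/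

import Mathlib

/-- A 2-term HA∞-algebra `(A₁ →d A₀, μ₂, μ₃, α₀, α₁)` over a field `k`.
`m00`, `m01`, `m10` are the three components of the bilinear map `μ₂`,
`m3` is the trilinear map `μ₃`, and `a0`, `a1` are the linear maps `α₀`, `α₁`. -/
structure TwoTermHA (k : Type*) [Field k] (A0 A1 : Type*)
    [AddCommGroup A0] [Module k A0] [AddCommGroup A1] [Module k A1] where
  d : A1 →ₗ[k] A0
  m00 : A0 →ₗ[k] A0 →ₗ[k] A0
  m01 : A0 →ₗ[k] A1 →ₗ[k] A1
  m10 : A1 →ₗ[k] A0 →ₗ[k] A1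
  m3 : A0 →ₗ[k] A0 →ₗ[k] A0 →ₗ[k] A1
  a0 : A0 →ₗ[k] A0
  a1 : A1 →ₗ[k] A1
  comm_d : ∀ m, a0 (d m) = d (a1 m)
  comm_m3 : ∀ a b c, a1 (m3 a b c) = m3 (a0 a) (a0 b) (a0 c)
  axb : ∀ a b, a0 (m00 a b) = m00 (a0 a) (a0 b)
  axc : ∀ a m, a1 (m01 a m) = m01 (a0 a) (a1 m)
  axd : ∀ m a, a1 (m10 m a) = m10 (a1 m) (a0 a)
  axe : ∀ a m, d (m01 a m) = m00 a (d m)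
  axf : ∀ m a, d (m10 m a) = m00 (d m) a
  axg : ∀ m n, m01 (d m) n = m10 m (d n)
  axh : ∀ a b c, d (m3 a b c) = m00 (m00 a b) (a0 c) - m00 (a0 a) (m00 b c)
  axi1 : ∀ a b m, m3 a b (d m) = m01 (m00 a b) (a1 m) - m01 (a0 a) (m01 b m)
  axi2 : ∀ a m c, m3 a (d m) c = m10 (m01 a m) (a0 c) - m01 (a0 a) (m10 m c)
  axi3 : ∀ m b c, m3 (d m) b c = m10 (m10 m b) (a0 c) - m10 (a1 m) (m00 b c)
  axj : ∀ a b c e,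
    m3 (m00 a b) (a0 c) (a0 e) - m3 (a0 a) (m00 b c) (a0 e)
        + m3 (a0 a) (a0 b) (m00 c e)
      = m10 (m3 a b c) (a0 (a0 e)) + m01 (a0 (a0 a)) (m3 b c e)

namespace TwoTermHA

variable {k A0 A1 : Type*} [Field k] [AddCommGroup A0] [Module k A0] [AddCommGroup A1]
  [Module k A1] (T : TwoTermHA k A0 A1)

def mulA (m n : A1) : A1 := T.m01 (T.d m) n

theorem mulA_eq_m10 (m n : A1) : T.mulA m n = T.m10 m (T.d n) := T.axg m n

theorem a1_mulA (m n : A1) : T.a1 (T.mulA m n) = T.mulA (T.a1 m) (T.a1 n) := by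
  rw [mulA, mulA, T.axc, T.comm_d]

theorem d_mulA (m n : A1) : T.d (T.mulA m n) = T.m00 (T.d m) (T.d n) := T.axe _ _

-- Axiom (i1) at `a = d m`, `b = d n`, rewritten through (e) and `α₀ ∘ d = d ∘ α₁`.
theorem mulA_hom_associator (m n p : A1) :
    T.mulA (T.mulA m n) (T.a1 p) - T.mulA (T.a1 m) (T.mulA n p)
      = T.m3 (T.d m) (T.d n) (T.d p) := by
  rw [T.axi1, mulA, d_mulA, mulA, mulA, T.comm_d]

theorem mulA_hom_assoc_of_m3_eq_zero (hstrict : T.m3 = 0) (m n p : A1) :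
    T.mulA (T.a1 m) (T.mulA n p) = T.mulA (T.mulA m n) (T.a1 p) := by
  have h := T.mulA_hom_associator m n p
  simp only [hstrict, LinearMap.zero_apply, sub_eq_zero] at h
  exact h.symm

end TwoTermHA

theorem strict_A1_hom_associative_and_d_morphism
    {k A0 A1 : Type*} [Field k]
    [AddCommGroup A0] [Module k A0] [AddCommGroup A1] [Module k A1]
    (T : TwoTermHA k A0 A1) (hstrict : T.m3 = 0) :
    (∀ m n, T.m01 (T.d m) n = T.m10 m (T.d n))
      ∧ (∀ m n, T.a1 (T.m01 (T.d m) n) = T.m01 (T.d (T.a1 m)) (T.a1 n))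
      ∧ (∀ m n p, T.m01 (T.d (T.a1 m)) (T.m01 (T.d n) p)
          = T.m01 (T.d (T.m01 (T.d m) n)) (T.a1 p))
      ∧ (∀ m n, T.d (T.m01 (T.d m) n) = T.m00 (T.d m) (T.d n))
      ∧ (∀ m, T.a0 (T.d m) = T.d (T.a1 m)) :=
  ⟨T.mulA_eq_m10, T.a1_mulA, T.mulA_hom_assoc_of_m3_eq_zero hstrict, T.d_mulA, T.comm_d⟩
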